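/- Under the hypotheses of the previous statement (η' = A_α η / |η|, columns of A_α sum to q_α < 0, |η(0)| = 1), the solution is given explicitly by η(t) = exp((A_α/q_α) · ln(1 + q_α t)) · η(0) for all t with 1 + q_α t > 0, where exp denotes the matrix exponential. -/

import Mathlib

open NormedSpace

/-- Under the hypotheses `η' = A_α η / |η|`, columns of `A_α` all summing to
`q_α < 0`, `1 + q_α t > 0` on the interval, and `|η(0)| = 1`, the solution is given
explicitly by the matrix exponential `η(t) = exp((A_α / q_α) ln(1 + q_α t)) η(0)`. -/
theorem corehd_single_process_explicit_solution (m : ℕ)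
    (Aα : Matrix (Fin m) (Fin m) ℝ)
    (qα : ℝ) (hq : qα < 0) (hcol : ∀ j : Fin m, ∑ i, Aα i j = qα)
    (I : Set ℝ) (hI : Convex ℝ I) (h0I : (0 : ℝ) ∈ I)
    (hIpos : ∀ t ∈ I, 0 < 1 + qα * t)
    (η : ℝ → Fin m → ℝ)
    (hpos : ∀ t ∈ I, 0 < ∑ i, η t i)
    (hode : ∀ i : Fin m, ∀ t ∈ I,
      HasDerivWithinAt (fun s => η s i) ((Aα.mulVec (η t)) i / ∑ i, η t i) I t)
    (hinit : ∑ i, η 0 i = 1) :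
    ∀ t ∈ I, η t = (NormedSpace.exp ((Real.log (1 + qα * t) / qα) • Aα)).mulVec (η 0) := by
  classical
  -- Step A: derivative of the total sum is qα.
  have hsumderiv : ∀ t ∈ I, HasDerivWithinAt (fun u => ∑ i, η u i) qα I t := by
    intro t ht
    have h := HasDerivWithinAt.fun_sum (u := Finset.univ) (fun i _ => hode i t ht)
    have hval : (∑ i, (Aα.mulVec (η t)) i / ∑ i, η t i) = qα := by
      rw [← Finset.sum_div]
      have : ∑ i, (Aα.mulVec (η t)) i = qα * ∑ i, η t i := by
        simp only [Matrix.mulVec, dotProduct]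
        rw [Finset.sum_comm, Finset.mul_sum]
        refine Finset.sum_congr rfl fun j _ => ?_
        rw [← Finset.sum_mul, hcol j]
      rw [this, mul_div_assoc, div_self (ne_of_gt (hpos t ht)), mul_one]
    rwa [hval] at h
  -- Step B: total sum equals 1 + qα t.
  have hsum : ∀ t ∈ I, ∑ i, η t i = 1 + qα * t := by
    intro t ht
    have hg : ∀ u ∈ I, HasDerivWithinAt (fun v => (∑ i, η v i) - qα * v) 0 I u := by
      intro u hu
      have := (hsumderiv u hu).fun_sub (((hasDerivAt_id u).const_mul qα).hasDerivWithinAt)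
      simpa using this
    have hb := hI.norm_image_sub_le_of_norm_hasDerivWithin_le
      (f := fun v => (∑ i, η v i) - qα * v)
      (f' := fun _ => (0 : ℝ)) (C := 0) hg (fun x _ => by simp) h0I ht
    have h0 : ((∑ i, η t i) - qα * t) - ((∑ i, η 0 i) - qα * 0) = 0 := by
      have hle : ‖((∑ i, η t i) - qα * t) - ((∑ i, η 0 i) - qα * 0)‖ ≤ 0 := by
        simpa using hb
      simpa using le_antisymm hle (norm_nonneg _)
    rw [hinit] at h0
    linarith [h0]
  -- the scalar function f
  set f : ℝ → ℝ := fun t => Real.log (1 + qα * t) / qα with hf_def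
  have hf0 : f 0 = 0 := by simp [hf_def]
  have hfderiv : ∀ t ∈ I, HasDerivWithinAt f (1 / (1 + qα * t)) I t := by
    intro t ht
    have h1 : HasDerivAt (fun u => 1 + qα * u) qα t := by
      simpa using ((hasDerivAt_id t).const_mul qα).const_add 1
    have h2 : HasDerivAt (fun u => Real.log (1 + qα * u)) ((1 + qα * t)⁻¹ * qα) t :=
      by simpa [Function.comp_def] using (Real.hasDerivAt_log (ne_of_gt (hIpos t ht))).comp t h1
    have h3 : HasDerivAt f ((1 + qα * t)⁻¹ * qα / qα) t := h2.div_const qα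
    have heq : (1 + qα * t)⁻¹ * qα / qα = 1 / (1 + qα * t) := by
      rw [mul_div_assoc, div_self hq.ne, mul_one, one_div]
    rw [heq] at h3
    exact h3.hasDerivWithinAt
  -- matrix norm instances
  letI : SeminormedRing (Matrix (Fin m) (Fin m) ℝ) := Matrix.linftyOpSemiNormedRing
  letI : NormedRing (Matrix (Fin m) (Fin m) ℝ) := Matrix.linftyOpNormedRing
  letI : NormedAlgebra ℝ (Matrix (Fin m) (Fin m) ℝ) := Matrix.linftyOpNormedAlgebra
  -- the integrating factor
  set E : ℝ → Matrix (Fin m) (Fin m) ℝ := fun t => exp ((-(f t)) • Aα) with hE_def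
  have hEderiv : ∀ t ∈ I,
      HasDerivWithinAt E ((-(1 / (1 + qα * t))) • (E t * Aα)) I t := by
    intro t ht
    have hg : HasDerivAt (fun u : ℝ => exp (u • Aα)) (exp ((-(f t)) • Aα) * Aα) (-(f t)) :=
      hasDerivAt_exp_smul_const Aα (-(f t))
    have hh : HasDerivWithinAt (fun u => -(f u)) (-(1 / (1 + qα * t))) I t :=
      (hfderiv t ht).neg
    have := hg.scomp_hasDerivWithinAt t hh
    simp [hE_def, Function.comp_def, neg_smul, one_div] at this ⊢
    exact this
  -- entry-wise derivative of E
  have hEntry : ∀ (i k : Fin m), ∀ t ∈ I,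
      HasDerivWithinAt (fun u => E u i k)
        (((-(1 / (1 + qα * t))) • (E t * Aα)) i k) I t := by
    intro i k t ht
    let L : Matrix (Fin m) (Fin m) ℝ →ₗ[ℝ] ℝ :=
      (LinearMap.proj (R := ℝ) (φ := fun _ : Fin m => ℝ) k).comp (LinearMap.proj (R := ℝ) (φ := fun _ : Fin m => Fin m → ℝ) i)
    have hL : HasFDerivAt (fun M : Matrix (Fin m) (Fin m) ℝ => L M)
        (LinearMap.toContinuousLinearMap L) (E t) :=
      (LinearMap.toContinuousLinearMap L).hasFDerivAt
    have := hL.comp_hasDerivWithinAt t (hEderiv t ht)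
    simp [L, Function.comp_def] at this ⊢
    exact this
  -- derivative of each component of (E t) ⬝ (η t) is zero
  have hphi : ∀ (i : Fin m), ∀ t ∈ I,
      HasDerivWithinAt (fun u => ∑ k, E u i k * η u k) 0 I t := by
    intro i t ht
    have hterm : ∀ k : Fin m, k ∈ Finset.univ → HasDerivWithinAt
        (fun u => E u i k * η u k)
        ((((-(1 / (1 + qα * t))) • (E t * Aα)) i k) * η t k
          + E t i k * ((Aα.mulVec (η t)) k / ∑ i', η t i')) I t :=
      fun k _ => (hEntry i k t ht).mul (hode k t ht)
    have hD := HasDerivWithinAt.fun_sum (u := Finset.univ) hterm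
    have hDzero : (∑ k, ((((-(1 / (1 + qα * t))) • (E t * Aα)) i k) * η t k
          + E t i k * ((Aα.mulVec (η t)) k / ∑ i', η t i'))) = 0 := by
      have hne : (1 + qα * t) ≠ 0 := ne_of_gt (hIpos t ht)
      simp only [Matrix.smul_apply, smul_eq_mul, Matrix.mul_apply, Matrix.mulVec,
        dotProduct, hsum t ht]
      have hcongr : ∀ k : Fin m,
          -(1 / (1 + qα * t)) * (∑ j, E t i j * Aα j k) * η t k
            + E t i k * ((∑ j, Aα k j * η t j) / (1 + qα * t))
          = (1 / (1 + qα * t)) * (E t i k * (∑ j, Aα k j * η t j)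
              - (∑ j, E t i j * Aα j k) * η t k) := by
        intro k
        field_simp
        ring
      calc ∑ k, (-(1 / (1 + qα * t)) * (∑ j, E t i j * Aα j k) * η t k
              + E t i k * ((∑ j, Aα k j * η t j) / (1 + qα * t)))
          = ∑ k, (1 / (1 + qα * t)) * (E t i k * (∑ j, Aα k j * η t j)
              - (∑ j, E t i j * Aα j k) * η t k) :=
            Finset.sum_congr rfl fun k _ => hcongr k
        _ = (1 / (1 + qα * t)) * ((∑ k, E t i k * (∑ j, Aα k j * η t j))
              - ∑ k, (∑ j, E t i j * Aα j k) * η t k) := by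
            rw [← Finset.mul_sum, Finset.sum_sub_distrib]
        _ = 0 := by
            have key : (∑ k, E t i k * (∑ j, Aα k j * η t j))
                = ∑ k, (∑ j, E t i j * Aα j k) * η t k := by
              simp only [Finset.mul_sum, Finset.sum_mul, mul_assoc]
              exact Finset.sum_comm
            rw [key, sub_self, mul_zero]
    rwa [hDzero] at hD
  -- constancy: (E t) ⬝ (η t) = η 0
  have hconst : ∀ t ∈ I, (E t).mulVec (η t) = η 0 := by
    intro t ht
    funext i
    have hb := hI.norm_image_sub_le_of_norm_hasDerivWithin_le
      (f := fun u => ∑ k, E u i k * η u k) (f' := fun _ => (0 : ℝ)) (C := 0)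
      (fun u hu => hphi i u hu) (fun x _ => by simp) h0I ht
    have h0 : (∑ k, E t i k * η t k) = ∑ k, E 0 i k * η 0 k := by
      have hle : ‖(∑ k, E t i k * η t k) - ∑ k, E 0 i k * η 0 k‖ ≤ 0 := by simpa using hb
      have := le_antisymm hle (norm_nonneg _)
      have := norm_eq_zero.mp (le_antisymm hle (norm_nonneg _))
      linarith [sub_eq_zero.mp this]
    have hE0 : E 0 = 1 := by
      rw [hE_def]; simp [hf0]
    rw [hE0] at h0
    have : (∑ k, (1 : Matrix (Fin m) (Fin m) ℝ) i k * η 0 k) = η 0 i := by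
      simp [Matrix.one_apply]
    rw [this] at h0
    simpa [Matrix.mulVec, dotProduct] using h0
  -- conclude
  intro t ht
  have hcomm : Commute ((f t) • Aα) ((-(f t)) • Aα) :=
    ((Commute.refl Aα).smul_left (f t)).smul_right (-(f t))
  have hFE : exp ((f t) • Aα) * E t = 1 := by
    rw [hE_def]
    rw [← Matrix.exp_add_of_commute _ _ hcomm]
    have : (f t) • Aα + (-(f t)) • Aα = 0 := by
      rw [← add_smul]; simp
    rw [this]
    exact exp_zero
  have : (exp ((f t) • Aα)).mulVec ((E t).mulVec (η t)) = η t := by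
    rw [Matrix.mulVec_mulVec, hFE, Matrix.one_mulVec]
  rw [hconst t ht] at this
  rw [← this]
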